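/- Uniqueness of the standing wave: if V : ℝ → ℝ is twice differentiable with V''(z) + f(V(z)) = 0 for all z ∈ ℝ, V(0) = 1/2, V(z) → 1 as z → −∞ and V(z) → 0 as z → +∞, then V(z) = 1/(1 + exp(z/√2)) for every z ∈ ℝ. -/

import Mathlib

/-- The standing-wave profile `U₀(z) = 1/(1 + exp(z/√2))`. -/
noncomputable def U₀ (z : ℝ) : ℝ := 1 / (1 + Real.exp (z / Real.sqrt 2))

/-- The balanced bistable nonlinearity `f(u) = u(1-u)(u-1/2)`. -/
noncomputable def f (u : ℝ) : ℝ := u * (1 - u) * (u - 1 / 2)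

/-!
Multiplying the equation by `V'` shows that the energy `V'² - (V (1 - V))² / 2` is constant. Since
`V → 0` at `+∞`, the mean value theorem gives points tending to `+∞` where `V' → 0`, so the energy
vanishes and `|V'| = |V| |1 - V| / √2`. By Grönwall's inequality this first-order bound keeps `V`
away from the equilibria `0` and `1` (touching one would make `V` constant), so `0 < V < 1`, `V'`
never vanishes and, being negative somewhere, is negative everywhere. Thus `V` solves the logistic
equation `V' = -V (1 - V) / √2`, as does `U₀`, and Grönwall's inequality for `V - U₀` gives
`V = U₀`.
-/

open Filter Set Topology Real

theorem pos_of_forall_ne_zero {X : Type*} [TopologicalSpace X] [PreconnectedSpace X]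
    {g : X → ℝ} (hg : Continuous g) (hne : ∀ x, g x ≠ 0) {a : X} (ha : 0 < g a) (b : X) :
    0 < g b := by
  by_contra! hb
  obtain ⟨c, hc⟩ := intermediate_value_univ b a hg ⟨hb, ha.le⟩
  exact hne c hc

theorem eq_zero_of_norm_deriv_le_of_eq_zero {E : Type*} [NormedAddCommGroup E]
    [NormedSpace ℝ E] {g g' : ℝ → E} {Q : ℝ → ℝ} (hg : ∀ x, HasDerivAt g (g' x) x)
    (hQ : Continuous Q) (hbound : ∀ x, ‖g' x‖ ≤ Q x * ‖g x‖) {a : ℝ} (ha : g a = 0) (b : ℝ) :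
    g b = 0 := by
  wlog hab : a ≤ b generalizing g g' Q a b
  · refine neg_neg b ▸ this (g := g ∘ Neg.neg) (g' := fun x => -g' (-x)) (Q := Q ∘ Neg.neg)
      (fun x => ?_) (hQ.comp continuous_neg) (fun x => ?_) (a := -a) (by simpa) (-b)
      (by linarith)
    · simpa using (hg (-x)).scomp x (hasDerivAt_neg x)
    · simpa using hbound (-x)
  obtain ⟨K, hK⟩ := (isCompact_Icc (a := a) (b := b)).bddAbove_image hQ.continuousOn
  refine eq_zero_of_abs_deriv_le_mul_abs_self_of_eq_zero_right (K := K)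
    (fun x _ => (hg x).continuousAt.continuousWithinAt) (fun x _ => (hg x).hasDerivWithinAt) ha
    (fun x hx => (hbound x).trans ?_) b ⟨hab, le_rfl⟩
  exact mul_le_mul_of_nonneg_right (hK ⟨x, Ico_subset_Icc_self hx, rfl⟩) (norm_nonneg _)

theorem exists_seq_tendsto_deriv_zero {g : ℝ → ℝ} {L : ℝ} (hg : Differentiable ℝ g)
    (hL : Tendsto g atTop (𝓝 L)) :
    ∃ ξ : ℕ → ℝ, Tendsto ξ atTop atTop ∧ Tendsto (fun n => deriv g (ξ n)) atTop (𝓝 0) := by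
  have hslope (n : ℕ) := exists_deriv_eq_slope g (lt_add_one (n : ℝ)) hg.continuous.continuousOn
    hg.differentiableOn
  choose ξ hξ hξ' using hslope
  refine ⟨ξ, tendsto_atTop_mono (fun n => (hξ n).1.le) tendsto_natCast_atTop_atTop, ?_⟩
  have hnat : Tendsto (fun n : ℕ => (n : ℝ)) atTop atTop := tendsto_natCast_atTop_atTop
  have hdiff := (hL.comp (tendsto_atTop_add_const_right _ 1 hnat)).sub (hL.comp hnat)
  rw [← sub_self L]
  refine hdiff.congr fun n => ?_
  simp [hξ' n]

theorem hasDerivAt_U₀ (z : ℝ) : HasDerivAt U₀ (-(U₀ z * (1 - U₀ z)) / √2) z := by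
  have hU₀ : U₀ = fun z => (1 + exp (z / √2))⁻¹ := by ext; simp [U₀]
  have hexp := (((hasDerivAt_id' z).div_const √2).exp).const_add 1
  rw [hU₀]
  refine (hexp.fun_inv (by positivity)).congr_deriv ?_
  field_simp
  ring

namespace StandingWave

variable {V : ℝ → ℝ}

theorem hasDerivAt_energy (hV : Differentiable ℝ V) (hV' : Differentiable ℝ (deriv V)) (z : ℝ) :
    HasDerivAt (fun z => deriv V z ^ 2 - (V z * (1 - V z)) ^ 2 / 2)
      (2 * deriv V z * (deriv (deriv V) z + f (V z))) z := by
  have hV1 := (hV z).hasDerivAt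
  refine (((hV' z).hasDerivAt.pow 2).sub
    (((hV1.mul (hV1.const_sub 1)).pow 2).div_const 2)).congr_deriv ?_
  simp only [Pi.mul_apply, f]
  ring

theorem deriv_sq_eq (hV : Differentiable ℝ V) (hV' : Differentiable ℝ (deriv V))
    (heq : ∀ z, deriv (deriv V) z + f (V z) = 0) (htop : Tendsto V atTop (𝓝 0)) (z : ℝ) :
    deriv V z ^ 2 = (V z * (1 - V z) / √2) ^ 2 := by
  set E := fun z => deriv V z ^ 2 - (V z * (1 - V z)) ^ 2 / 2 with hE_def
  have hE : ∀ z, HasDerivAt E 0 z := fun z => by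
    simpa [heq z] using hasDerivAt_energy hV hV' z
  have hconst (z : ℝ) : E z = E 0 :=
    is_const_of_deriv_eq_zero (fun z => (hE z).differentiableAt) (fun z => (hE z).deriv) z 0
  obtain ⟨ξ, hξ, hξ'⟩ := exists_seq_tendsto_deriv_zero hV htop
  have hlim : Tendsto (fun n => E (ξ n)) atTop (𝓝 0) := by
    have hVξ := htop.comp hξ
    simpa using (hξ'.pow 2).sub (((hVξ.mul (hVξ.const_sub 1)).pow 2).div_const 2)
  have hE0 : E 0 = 0 := tendsto_nhds_unique (by simp only [hconst]; exact tendsto_const_nhds) hlim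
  have hEz : E z = 0 := (hconst z).trans hE0
  rw [hE_def] at hEz
  rw [div_pow, sq_sqrt zero_le_two]
  linarith

theorem mul_one_sub_pos (hV : Differentiable ℝ V) (hV' : Differentiable ℝ (deriv V))
    (heq : ∀ z, deriv (deriv V) z + f (V z) = 0) (h0 : V 0 = 1 / 2)
    (htop : Tendsto V atTop (𝓝 0)) (z : ℝ) : 0 < V z * (1 - V z) := by
  have habs (z : ℝ) : |deriv V z| = |V z| * |1 - V z| / √2 := by
    have := deriv_sq_eq hV hV' heq htop z
    rwa [sq_eq_sq_iff_abs_eq_abs, abs_div, abs_mul, abs_of_pos (sqrt_pos.2 two_pos)] at this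
  have hVc := hV.continuous
  refine pos_of_forall_ne_zero (g := fun z => V z * (1 - V z)) (a := 0) (by fun_prop)
    (fun z₁ hz₁ => ?_) (by norm_num [h0]) z
  rcases mul_eq_zero.1 hz₁ with hz₁ | hz₁
  · have := eq_zero_of_norm_deriv_le_of_eq_zero (fun z => (hV z).hasDerivAt)
      (Q := fun z => |1 - V z| / √2) (by fun_prop)
      (fun z => le_of_eq (by rw [Real.norm_eq_abs, Real.norm_eq_abs, habs z]; ring)) hz₁ 0
    norm_num [h0] at this
  · have := eq_zero_of_norm_deriv_le_of_eq_zero (fun z => (hV z).hasDerivAt.const_sub 1)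
      (Q := fun z => |V z| / √2) (by fun_prop)
      (fun z => le_of_eq (by rw [norm_neg, Real.norm_eq_abs, Real.norm_eq_abs, habs z]; ring))
      hz₁ 0
    norm_num [h0] at this

theorem deriv_lt_zero (hV : Differentiable ℝ V) (hV' : Differentiable ℝ (deriv V))
    (heq : ∀ z, deriv (deriv V) z + f (V z) = 0) (h0 : V 0 = 1 / 2)
    (htop : Tendsto V atTop (𝓝 0)) (z : ℝ) : deriv V z < 0 := by
  have hne (z : ℝ) : -deriv V z ≠ 0 := by
    have hsq := deriv_sq_eq hV hV' heq htop z
    have hpos := div_pos (mul_one_sub_pos hV hV' heq h0 htop z) (sqrt_pos.2 two_pos)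
    intro h
    rw [neg_eq_zero.1 h] at hsq
    nlinarith
  obtain ⟨z₀, hz₀, hVz₀⟩ :=
    ((eventually_gt_atTop 0).and (htop.eventually (eventually_lt_nhds one_half_pos))).exists
  obtain ⟨c, -, hc⟩ := exists_deriv_eq_slope V hz₀ hV.continuous.continuousOn hV.differentiableOn
  have hc_neg : deriv V c < 0 := by
    rw [hc, h0]
    exact div_neg_of_neg_of_pos (by linarith) (by linarith)
  exact neg_pos.1 (pos_of_forall_ne_zero hV'.continuous.neg hne (neg_pos.2 hc_neg) z)

theorem deriv_eq_logistic (hV : Differentiable ℝ V) (hV' : Differentiable ℝ (deriv V))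
    (heq : ∀ z, deriv (deriv V) z + f (V z) = 0) (h0 : V 0 = 1 / 2)
    (htop : Tendsto V atTop (𝓝 0)) (z : ℝ) : deriv V z = -(V z * (1 - V z)) / √2 := by
  rcases eq_or_eq_neg_of_sq_eq_sq _ _ (deriv_sq_eq hV hV' heq htop z) with h | h
  · have hneg := deriv_lt_zero hV hV' heq h0 htop z
    have hpos := div_pos (mul_one_sub_pos hV hV' heq h0 htop z) (sqrt_pos.2 two_pos)
    linarith
  · rw [h, neg_div]

end StandingWave

theorem stmt_5_general (V : ℝ → ℝ)
    (hV : Differentiable ℝ V) (hV' : Differentiable ℝ (deriv V))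
    (heq : ∀ z : ℝ, deriv (deriv V) z + f (V z) = 0)
    (h0 : V 0 = 1 / 2)
    (htop : Filter.Tendsto V Filter.atTop (nhds 0)) :
    ∀ z : ℝ, V z = U₀ z := by
  have hU₀ : Continuous U₀ := continuous_iff_continuousAt.2 fun z => (hasDerivAt_U₀ z).continuousAt
  have hVc := hV.continuous
  refine fun z => sub_eq_zero.1 (eq_zero_of_norm_deriv_le_of_eq_zero (g := fun z => V z - U₀ z)
    (fun z => (hV z).hasDerivAt.sub (hasDerivAt_U₀ z)) (Q := fun z => |1 - V z - U₀ z| / √2)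
    (by fun_prop) (fun z => le_of_eq ?_) (a := 0) ?_ z)
  · rw [StandingWave.deriv_eq_logistic hV hV' heq h0 htop z, Real.norm_eq_abs, Real.norm_eq_abs,
      show -(V z * (1 - V z)) / √2 - -(U₀ z * (1 - U₀ z)) / √2
        = -((1 - V z - U₀ z) / √2 * (V z - U₀ z)) by ring,
      abs_neg, abs_mul, abs_div, abs_of_pos (sqrt_pos.2 two_pos)]
  · norm_num [U₀, h0]

theorem stmt_5 (V : ℝ → ℝ)
    (hV : Differentiable ℝ V) (hV' : Differentiable ℝ (deriv V))
    (heq : ∀ z : ℝ, deriv (deriv V) z + f (V z) = 0)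
    (h0 : V 0 = 1 / 2)
    (hbot : Filter.Tendsto V Filter.atBot (nhds 1))
    (htop : Filter.Tendsto V Filter.atTop (nhds 0)) :
    ∀ z : ℝ, V z = U₀ z :=
  stmt_5_general V hV hV' heq h0 htop
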